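/- Let f ∈ H¹(𝕋) and suppose ρ : 𝕋 → ℝ is measurable with 0 < ρ ≤ ρ̄ a.e., u ∈ L²(𝕋), and ∫₀¹ ρ u² / 2 ≤ E. Then for every η > 0 there exists C_η > 0 depending only on η, ρ̄, E (one can take C_η = E/η + 54 ρ̄ E²/η³) such that ∫₀¹ |u f ∂_x f| ≤ η ∫₀¹ (∂_x f)²/ρ + C_η ∫₀¹ f². -/

import Mathlib

/-!
Take `y` where `f²` is minimal, so `f(y)² ≤ ∫ f²`; integrating `(f²)' = 2ff'` from `y` gives
`sup f² ≤ ∫ f² + 2 ∫ |ff'|`. Weighted AM-GM with weight `ρ` bounds `|u f f'|` by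
`η/2 · f'²/ρ + ρu²f²/(2η)`, and the sup bound together with `∫ ρu² ≤ 2E` turns the last term
into `E/η · (∫ f² + 2 ∫ |ff'|)`. A second weighted AM-GM, now using `ρ ≤ ρ̄`, absorbs
`2E/η · ∫ |ff'|` into `η/2 · ∫ f'²/ρ + 2ρ̄E²/η³ · ∫ f²`.
-/

open Real MeasureTheory intervalIntegral Set

lemma abs_mul_le_weighted {a b r η : ℝ} (s : ℝ) (hr : 0 < r) (hη : 0 < η) :
    s * |a * b| ≤ η / 2 * (a ^ 2 / r) + s ^ 2 / (2 * η) * (r * b ^ 2) := by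
  have hsq : 0 ≤ (η * |a| - s * r * |b|) ^ 2 / (2 * η * r) := by positivity
  have hexp : η / 2 * (a ^ 2 / r) + s ^ 2 / (2 * η) * (r * b ^ 2) - s * |a * b|
      = (η * |a| - s * r * |b|) ^ 2 / (2 * η * r) := by
    rw [abs_mul, ← sq_abs a, ← sq_abs b]
    field_simp
    ring
  linarith

lemma abs_sub_le_integral_abs_deriv {g g' : ℝ → ℝ} {a b x y : ℝ}
    (hg : ∀ t, HasDerivAt g (g' t) t) (hg' : IntervalIntegrable g' volume a b)
    (hx : x ∈ Icc a b) (hy : y ∈ Icc a b) :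
    |g x - g y| ≤ ∫ t in a..b, |g' t| := by
  have hab : a ≤ b := hx.1.trans hx.2
  have hx' : x ∈ uIcc a b := by rwa [uIcc_of_le hab]
  have hy' : y ∈ uIcc a b := by rwa [uIcc_of_le hab]
  have hsub : uIcc y x ⊆ uIcc a b := uIcc_subset_uIcc hy' hx'
  rw [← integral_eq_sub_of_hasDerivAt (fun t _ => hg t) (hg'.mono_set hsub)]
  calc |∫ t in y..x, g' t| ≤ |(∫ t in y..x, |g' t|)| := by
        simpa only [Real.norm_eq_abs] using
          norm_integral_le_abs_integral_norm (f := g') (a := y) (b := x) (μ := volume)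
    _ ≤ |(∫ t in a..b, |g' t|)| :=
        abs_integral_mono_interval (uIoc_subset_uIoc_of_uIcc_subset_uIcc hsub)
          (ae_of_all _ fun _ => abs_nonneg _) hg'.abs
    _ = ∫ t in a..b, |g' t| := abs_of_nonneg (integral_nonneg hab fun _ _ => abs_nonneg _)

lemma exists_mul_le_integral {g : ℝ → ℝ} {a b : ℝ} (hab : a ≤ b) (hg : ContinuousOn g (Icc a b)) :
    ∃ y ∈ Icc a b, (b - a) * g y ≤ ∫ t in a..b, g t := by
  obtain ⟨y, hy, hmin⟩ := isCompact_Icc.exists_isMinOn (nonempty_Icc.2 hab) hg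
  refine ⟨y, hy, ?_⟩
  calc (b - a) * g y = ∫ _ in a..b, g y := by simp
    _ ≤ ∫ t in a..b, g t :=
        integral_mono_on hab intervalIntegrable_const (hg.intervalIntegrable_of_Icc hab)
          fun _ ht => hmin ht

lemma mul_sq_le_integral_sq_add {f f' : ℝ → ℝ} {a b x : ℝ}
    (hf : ∀ t, HasDerivAt f (f' t) t) (hf' : Continuous f') (hx : x ∈ Icc a b) :
    (b - a) * f x ^ 2 ≤ (∫ t in a..b, f t ^ 2) + 2 * (b - a) * ∫ t in a..b, |f t * f' t| := by
  have hab : a ≤ b := hx.1.trans hx.2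
  have hfc : Continuous f := continuous_iff_continuousAt.2 fun t => (hf t).continuousAt
  obtain ⟨y, hy, hy_le⟩ := exists_mul_le_integral (g := fun t => f t ^ 2) hab
    (hfc.pow 2).continuousOn
  have hosc : f x ^ 2 - f y ^ 2 ≤ 2 * ∫ t in a..b, |f t * f' t| :=
    calc f x ^ 2 - f y ^ 2 ≤ |f x ^ 2 - f y ^ 2| := le_abs_self _
      _ ≤ ∫ t in a..b, |2 * (f t * f' t)| :=
          abs_sub_le_integral_abs_deriv (fun t => by simpa [mul_assoc] using (hf t).pow 2)
            ((continuous_const.mul (hfc.mul hf')).intervalIntegrable a b) hx hy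
      _ = 2 * ∫ t in a..b, |f t * f' t| := by
          simp only [abs_mul (2 : ℝ), abs_two, intervalIntegral.integral_const_mul]
  nlinarith [mul_le_mul_of_nonneg_left hosc (sub_nonneg.2 hab)]

lemma integral_abs_mul_mul_le {f f' ρ u : ℝ → ℝ} {a b M η : ℝ} (hab : a ≤ b) (hη : 0 < η)
    (hρ : ∀ᵐ x ∂volume.restrict (Icc a b), 0 < ρ x) (hM : ∀ x ∈ Icc a b, f x ^ 2 ≤ M)
    (hρu : IntervalIntegrable (fun x => ρ x * u x ^ 2) volume a b)
    (hufi : IntervalIntegrable (fun x => |u x * f x * f' x|) volume a b)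
    (hf'i : IntervalIntegrable (fun x => f' x ^ 2 / ρ x) volume a b) :
    ∫ x in a..b, |u x * f x * f' x| ≤
      η / 2 * (∫ x in a..b, f' x ^ 2 / ρ x) + M / (2 * η) * ∫ x in a..b, ρ x * u x ^ 2 := by
  simp only [← intervalIntegral.integral_const_mul]
  rw [← integral_add (hf'i.const_mul _) (hρu.const_mul _)]
  refine integral_mono_ae_restrict hab hufi ((hf'i.const_mul _).add (hρu.const_mul _)) ?_
  filter_upwards [hρ, ae_restrict_mem measurableSet_Icc] with x hρx hx
  have hρu0 : 0 ≤ ρ x * u x ^ 2 := by positivity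
  calc |u x * f x * f' x| = 1 * |f' x * (u x * f x)| := by ring_nf
    _ ≤ η / 2 * (f' x ^ 2 / ρ x) + 1 ^ 2 / (2 * η) * (ρ x * (u x * f x) ^ 2) :=
        abs_mul_le_weighted 1 hρx hη
    _ = η / 2 * (f' x ^ 2 / ρ x) + ρ x * u x ^ 2 * f x ^ 2 / (2 * η) := by ring
    _ ≤ η / 2 * (f' x ^ 2 / ρ x) + ρ x * u x ^ 2 * M / (2 * η) := by gcongr; exact hM x hx
    _ = η / 2 * (f' x ^ 2 / ρ x) + M / (2 * η) * (ρ x * u x ^ 2) := by ring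

lemma mul_integral_abs_mul_deriv_le {f f' ρ : ℝ → ℝ} {a b ρbar η : ℝ} (s : ℝ) (hab : a ≤ b)
    (hη : 0 < η) (hf : Continuous f) (hf' : Continuous f')
    (hρ : ∀ᵐ x ∂volume.restrict (Icc a b), 0 < ρ x ∧ ρ x ≤ ρbar)
    (hf'i : IntervalIntegrable (fun x => f' x ^ 2 / ρ x) volume a b) :
    s * ∫ x in a..b, |f x * f' x| ≤
      η / 2 * (∫ x in a..b, f' x ^ 2 / ρ x) + s ^ 2 * ρbar / (2 * η) * ∫ x in a..b, f x ^ 2 := by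
  have hf2 : IntervalIntegrable (fun x => f x ^ 2) volume a b := (hf.pow 2).intervalIntegrable a b
  simp only [← intervalIntegral.integral_const_mul]
  rw [← integral_add (hf'i.const_mul _) (hf2.const_mul _)]
  refine integral_mono_ae_restrict hab (((hf.mul hf').abs.intervalIntegrable a b).const_mul s)
    ((hf'i.const_mul _).add (hf2.const_mul _)) ?_
  filter_upwards [hρ] with x ⟨hρx, hρx_le⟩
  calc s * |f x * f' x| = s * |f' x * f x| := by rw [mul_comm (f x)]
    _ ≤ η / 2 * (f' x ^ 2 / ρ x) + s ^ 2 / (2 * η) * (ρ x * f x ^ 2) :=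
        abs_mul_le_weighted s hρx hη
    _ = η / 2 * (f' x ^ 2 / ρ x) + s ^ 2 * f x ^ 2 / (2 * η) * ρ x := by ring
    _ ≤ η / 2 * (f' x ^ 2 / ρ x) + s ^ 2 * f x ^ 2 / (2 * η) * ρbar := by gcongr
    _ = η / 2 * (f' x ^ 2 / ρ x) + s ^ 2 * ρbar / (2 * η) * f x ^ 2 := by ring

theorem stmt_4_general (f f' ρ u : ℝ → ℝ) (ρbar E : ℝ)
    (hderiv : ∀ x, HasDerivAt f (f' x) x) (hf'cont : Continuous f')
    (hρ : ∀ᵐ x ∂(volume.restrict (Set.Ioc (0:ℝ) 1)), 0 < ρ x ∧ ρ x ≤ ρbar)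
    (huL2 : IntervalIntegrable (fun x => ρ x * u x ^ 2) volume 0 1)
    (hE : (∫ x in (0:ℝ)..1, ρ x * u x ^ 2 / 2) ≤ E)
    (hint1 : IntervalIntegrable (fun x => |u x * f x * f' x|) volume 0 1)
    (hint2 : IntervalIntegrable (fun x => (f' x) ^ 2 / ρ x) volume 0 1) :
    ∀ η > 0,
      (∫ x in (0:ℝ)..1, |u x * f x * f' x|) ≤
        η * (∫ x in (0:ℝ)..1, (f' x) ^ 2 / ρ x) +
          (E / η + 54 * ρbar * E ^ 2 / η ^ 3) * (∫ x in (0:ℝ)..1, (f x) ^ 2) := by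
  intro η hη
  have hρbar : 0 ≤ ρbar := by
    have : (ae (volume.restrict (Ioc (0:ℝ) 1))).NeBot := ae_neBot.2 (by simp)
    obtain ⟨x, hx_pos, hx_le⟩ := hρ.exists
    linarith
  rw [restrict_Ioc_eq_restrict_Icc] at hρ
  have hfc : Continuous f := continuous_iff_continuousAt.2 fun x => (hderiv x).continuousAt
  have hsup (x : ℝ) (hx : x ∈ Icc (0:ℝ) 1) :
      f x ^ 2 ≤ (∫ t in (0:ℝ)..1, f t ^ 2) + 2 * ∫ t in (0:ℝ)..1, |f t * f' t| := by
    simpa only [sub_zero, one_mul, mul_one] using mul_sq_le_integral_sq_add hderiv hf'cont hx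
  have hA :=
    integral_abs_mul_mul_le zero_le_one hη (hρ.mono fun _ h => h.1) hsup huL2 hint1 hint2
  have hB := mul_integral_abs_mul_deriv_le (2 * E / η) zero_le_one hη hfc hf'cont hρ hint2
  set F := ∫ x in (0:ℝ)..1, f x ^ 2
  set J := ∫ x in (0:ℝ)..1, |f x * f' x|
  set K := ∫ x in (0:ℝ)..1, ρ x * u x ^ 2
  have hK : K ≤ 2 * E := by rw [intervalIntegral.integral_div] at hE; linarith
  have hF : 0 ≤ F := integral_nonneg zero_le_one fun _ _ => sq_nonneg _
  have hJ : 0 ≤ J := integral_nonneg zero_le_one fun _ _ => abs_nonneg _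
  have hKE : (F + 2 * J) / (2 * η) * K ≤ (F + 2 * J) / (2 * η) * (2 * E) := by gcongr
  have hc : 0 ≤ ρbar * E ^ 2 / η ^ 3 * F := by positivity
  -- the argument gives the constant `2` where the statement has `54`
  linear_combination hA + hKE + hB + 52 * hc

/-- Lemma (GN): for `f ∈ H¹(𝕋)` (here a `C¹` 1-periodic function), `ρ` measurable with
`0 < ρ ≤ ρ̄` a.e., `u ∈ L²` with `∫ ρ u²/2 ≤ E`, one has for every `η > 0`
`∫ |u f f'| ≤ η ∫ f'²/ρ + C_η ∫ f²` with `C_η = E/η + 54 ρ̄ E²/η³`. -/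
theorem stmt_4 (f f' ρ u : ℝ → ℝ) (ρbar E : ℝ)
    (hper : Function.Periodic f 1)
    (hderiv : ∀ x, HasDerivAt f (f' x) x) (hf'cont : Continuous f')
    (hρmeas : Measurable ρ)
    (hρ : ∀ᵐ x ∂(volume.restrict (Set.Ioc (0:ℝ) 1)), 0 < ρ x ∧ ρ x ≤ ρbar)
    (humeas : Measurable u)
    (huL2 : IntervalIntegrable (fun x => ρ x * u x ^ 2) volume 0 1)
    (hE : (∫ x in (0:ℝ)..1, ρ x * u x ^ 2 / 2) ≤ E)
    (hint1 : IntervalIntegrable (fun x => |u x * f x * f' x|) volume 0 1)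
    (hint2 : IntervalIntegrable (fun x => (f' x) ^ 2 / ρ x) volume 0 1) :
    ∀ η > 0,
      (∫ x in (0:ℝ)..1, |u x * f x * f' x|) ≤
        η * (∫ x in (0:ℝ)..1, (f' x) ^ 2 / ρ x) +
          (E / η + 54 * ρbar * E ^ 2 / η ^ 3) * (∫ x in (0:ℝ)..1, (f x) ^ 2) :=
  stmt_4_general f f' ρ u ρbar E hderiv hf'cont hρ huL2 hE hint1 hint2
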